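/- arXiv:1403.7980 — 4 statements merged into one kernel-verified Lean document; each statement's English description precedes it below -/
import Mathlib

section
/- Let d ≥ 2, let X be a sequence of d−1 points of ℝ^d, and let s, t ∈ ℝ^d be such that S := X∘s and T := X∘t satisfy ⟦S⟧ ≠ 0 and ⟦T⟧ ≠ 0. Then the creasing on X satisfies c(h(S), h(T), X) = [T∘s]/(⟦T⟧·⟦S⟧), i.e. (z_T(π(s)) − z_S(π(s)))/⟦S⟧ = [T∘s]/(⟦T⟧·⟦S⟧). -/
/-!
Subtracting `z_T ∘ π` from the `z`-row of the matrix of `[T∘s]` is a row operation: `z_T` is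
affine, so this row is a combination of the coordinate rows and the row of ones. As `h(T)`
contains the points of `T`, the new row vanishes except in the column of `s`, where it is
`z(s) - z_T(π s)`, and expanding along it gives `[T∘s] = (z_T(π s) - z(s)) ⟦T⟧`. Finally
`z(s) = z_S(π s)` because `s ∈ h(S)`.
-/

/-- `[S]`: determinant of the k×k matrix whose columns are the points of `S`
with an appended final entry 1. -/
noncomputable def mdet {k : ℕ} (S : Fin k → (Fin (k - 1) → ℝ)) : ℝ :=
  Matrix.det (Matrix.of (fun i j : Fin k =>
    if h : (i : ℕ) < k - 1 then S j ⟨i, h⟩ else 1))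

/-- `π`: deletion of the last coordinate. -/
def projZ {d : ℕ} (p : Fin d → ℝ) : Fin (d - 1) → ℝ :=
  fun i => p (Fin.castLE (Nat.sub_le d 1) i)

/-- `⟦S⟧ = [π(S)]` for a sequence of d points of ℝ^d. -/
noncomputable def pdet {d : ℕ} (S : Fin d → (Fin d → ℝ)) : ℝ :=
  mdet (fun i => projZ (S i))

/-- last ('z') coordinate of a point of ℝ^d. -/
def zc {d : ℕ} (q : Fin d → ℝ) : ℝ :=
  if h : 0 < d then q ⟨d - 1, by omega⟩ else 0

/-- `(p, z)`: point of ℝ^d obtained from `p ∈ ℝ^{d-1}` by appending `z`. -/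
def liftPt {d : ℕ} (p : Fin (d - 1) → ℝ) (z : ℝ) : Fin d → ℝ :=
  fun i => if h : (i : ℕ) < d - 1 then p ⟨i, h⟩ else z

/-- concatenation `X ∘ s` of a sequence of `k-1` points with one more point. -/
def snoc' {α : Type*} {k : ℕ} (X : Fin (k - 1) → α) (s : α) : Fin k → α :=
  fun i => if h : (i : ℕ) < k - 1 then X ⟨i, h⟩ else s

namespace Matrix

variable {n R : Type*} [Fintype n] [DecidableEq n] [CommRing R]

theorem det_updateRow_add_mem_span (A : Matrix n n R) {i : n} {v : n → R}
    (hv : v ∈ Submodule.span R (A '' {i}ᶜ)) :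
    (A.updateRow i (A i + v)).det = A.det := by
  rw [det_updateRow_add, updateRow_eq_self, add_eq_left]
  induction hv using Submodule.span_induction with
  | mem v hv =>
    obtain ⟨k, hk, rfl⟩ := hv
    exact det_updateRow_eq_zero hk
  | zero => simpa using det_updateRow_smul A i 0 0
  | add u v _ _ hu hv => rw [det_updateRow_add, hu, hv, add_zero]
  | smul c v _ hv => rw [det_updateRow_smul, hv, mul_zero]

theorem det_updateRow_single {m : ℕ} (A : Matrix (Fin (m + 1)) (Fin (m + 1)) R)
    (i j : Fin (m + 1)) (c : R) :
    (A.updateRow i (Pi.single j c)).det =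
      (-1) ^ (i + j : ℕ) * c * (A.submatrix i.succAbove j.succAbove).det := by
  have hc : Pi.single j c = c • Pi.single j (1 : R) := by
    rw [← Pi.single_smul', smul_eq_mul, mul_one]
  rw [hc, det_updateRow_smul, ← adjugate_apply, adjugate_fin_succ_eq_det_submatrix]
  ring

end Matrix

theorem AffineMap.comp_mem_span_insert_one {R ι κ : Type*} [CommRing R] [Fintype κ]
    (g : (κ → R) →ᵃ[R] R) (f : ι → κ → R) :
    (fun j => g (f j)) ∈ Submodule.span R (insert 1 (Set.range fun i j => f j i)) := by
  classical
  have hg :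
      (fun j => g (f j)) = ∑ i, g.linear (Pi.single i 1) • (fun j => f j i) + g 0 • 1 := by
    funext j
    have hlin : g.linear (f j) = ∑ i, f j i • g.linear (Pi.single i 1) := by
      conv_lhs => rw [← Finset.univ_sum_single (f j)]
      refine (map_sum _ _ _).trans (Finset.sum_congr rfl fun i _ => ?_)
      rw [← map_smul, ← Pi.single_smul', smul_eq_mul, mul_one]
    rw [show g (f j) = g.linear (f j) + g 0 from congrFun g.decomp (f j), hlin]
    simp [mul_comm]
  rw [hg]
  exact add_mem (Submodule.sum_mem _ fun i _ => Submodule.smul_mem _ _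
    (Submodule.subset_span (Set.mem_insert_of_mem _ ⟨i, rfl⟩)))
    (Submodule.smul_mem _ _ (Submodule.subset_span (Set.mem_insert _ _)))

def homMatrix {k : ℕ} (S : Fin k → (Fin (k - 1) → ℝ)) : Matrix (Fin k) (Fin k) ℝ :=
  Matrix.of fun i j => if h : (i : ℕ) < k - 1 then S j ⟨i, h⟩ else 1

theorem mdet_eq_det_homMatrix {k : ℕ} (S : Fin k → (Fin (k - 1) → ℝ)) :
    mdet S = (homMatrix S).det :=
  rfl

theorem zc_eq {d : ℕ} (hd : 0 < d) (p : Fin d → ℝ) : zc p = p ⟨d - 1, by omega⟩ :=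
  dif_pos hd

theorem snoc'_castSucc {α : Type*} {d : ℕ} (X : Fin d → α) (s : α) (j : Fin d) :
    snoc' (k := d + 1) X s j.castSucc = X j :=
  dif_pos j.isLt

theorem snoc'_last {α : Type*} {d : ℕ} (X : Fin d → α) (s : α) :
    snoc' (k := d + 1) X s (Fin.last d) = s :=
  dif_neg (lt_irrefl d)

section homMatrix

variable {d : ℕ} (P : Fin (d + 1) → Fin d → ℝ)

theorem homMatrix_castSucc (i : Fin d) : homMatrix P i.castSucc = fun j => P j i :=
  funext fun _ => dif_pos i.isLt

theorem homMatrix_last : homMatrix P (Fin.last d) = 1 :=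
  funext fun _ => dif_neg (lt_irrefl d)

theorem homMatrix_submatrix_succAbove (hd : 0 < d) :
    (homMatrix P).submatrix (⟨d - 1, by omega⟩ : Fin d).castSucc.succAbove
        (Fin.last d).succAbove =
      homMatrix fun j : Fin d => projZ (P j.castSucc) := by
  ext i j
  simp only [Matrix.submatrix_apply, Fin.succAbove_last, homMatrix, Matrix.of_apply]
  by_cases h : (i : ℕ) < d - 1
  · rw [Fin.succAbove_of_castSucc_lt _ _ (by simpa [Fin.lt_def] using h)]
    simp [h, projZ]
  · rw [Fin.succAbove_of_le_castSucc _ _ (by simp [Fin.le_def]; omega)]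
    simp only [Fin.val_succ, h, dite_false]
    rw [dif_neg (by omega)]

end homMatrix

theorem mdet_snoc_eq_mul_pdet {d : ℕ} (hd : 0 < d) (T : Fin d → Fin d → ℝ) (s : Fin d → ℝ)
    (z : (Fin (d - 1) → ℝ) →ᵃ[ℝ] ℝ) (hz : ∀ i, z (projZ (T i)) = zc (T i)) :
    mdet (snoc' (k := d + 1) T s) = (z (projZ s) - zc s) * pdet T := by
  set P : Fin (d + 1) → Fin d → ℝ := snoc' T s
  let zr : Fin d := ⟨d - 1, by omega⟩
  have hspan :
      (fun j => z (projZ (P j))) ∈ Submodule.span ℝ (homMatrix P '' {zr.castSucc}ᶜ) := by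
    refine Submodule.span_mono ?_ (z.comp_mem_span_insert_one fun j => projZ (P j))
    rintro _ (rfl | ⟨i, rfl⟩)
    · exact ⟨Fin.last d, by simp [zr, Fin.ext_iff]; omega, homMatrix_last P⟩
    · exact ⟨(Fin.castLE (Nat.sub_le d 1) i).castSucc, by simp [zr, Fin.ext_iff]; omega,
        homMatrix_castSucc P _⟩
  have hrow : homMatrix P zr.castSucc + -(fun j => z (projZ (P j))) =
      Pi.single (Fin.last d) (zc s - z (projZ s)) := by
    rw [homMatrix_castSucc]
    funext j
    cases j using Fin.lastCases with
    | last => simp [P, zr, snoc'_last, zc_eq hd, sub_eq_add_neg]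
    | cast j => simp [P, zr, snoc'_castSucc, hz, zc_eq hd]
  have hsign : (-1 : ℝ) ^ ((zr.castSucc : ℕ) + (Fin.last d : ℕ)) = -1 :=
    Odd.neg_one_pow ⟨d - 1, by simp [zr]; omega⟩
  calc mdet P = (homMatrix P).det := mdet_eq_det_homMatrix P
    _ = ((homMatrix P).updateRow zr.castSucc
          (Pi.single (Fin.last d) (zc s - z (projZ s)))).det := by
      rw [← hrow, (homMatrix P).det_updateRow_add_mem_span (neg_mem hspan)]
    _ = (z (projZ s) - zc s) * pdet T := by
      rw [Matrix.det_updateRow_single, hsign, homMatrix_submatrix_succAbove P hd]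
      simp only [P, snoc'_castSucc]
      rw [pdet, mdet_eq_det_homMatrix]
      ring

theorem stmt2_general {d : ℕ} (hd : 2 ≤ d) (X : Fin (d - 1) → (Fin d → ℝ)) (s t : Fin d → ℝ)
    (hT : pdet (snoc' X t) ≠ 0)
    (zS zT : (Fin (d - 1) → ℝ) →ᵃ[ℝ] ℝ)
    (hzS : ∀ i, zS (projZ (snoc' X s i)) = zc (snoc' X s i))
    (hzT : ∀ i, zT (projZ (snoc' X t i)) = zc (snoc' X t i)) :
    (zT (projZ s) - zS (projZ s)) / pdet (snoc' X s) =
      mdet (snoc' (k := d + 1) (snoc' X t) s) / (pdet (snoc' X t) * pdet (snoc' X s)) := by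
  have hs : zS (projZ s) = zc s := by simpa [snoc'] using hzS ⟨d - 1, by omega⟩
  rw [mdet_snoc_eq_mul_pdet (by omega) _ s zT hzT, ← hs, mul_comm (pdet _),
    mul_div_mul_right _ _ hT]

/-- Equation (3): for a sequence `X` of `d-1` points of ℝ^d and points
`s, t` with `S := X∘s`, `T := X∘t`, `⟦S⟧ ≠ 0 ≠ ⟦T⟧`, the creasing on `X` satisfies
`c(h(S), h(T), X) = [T∘s]/(⟦T⟧·⟦S⟧)`. -/
theorem stmt2 {d : ℕ} (hd : 2 ≤ d) (X : Fin (d - 1) → (Fin d → ℝ)) (s t : Fin d → ℝ)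
    (hS : pdet (snoc' X s) ≠ 0) (hT : pdet (snoc' X t) ≠ 0)
    (zS zT : (Fin (d - 1) → ℝ) →ᵃ[ℝ] ℝ)
    (hzS : ∀ i, zS (projZ (snoc' X s i)) = zc (snoc' X s i))
    (hzT : ∀ i, zT (projZ (snoc' X t i)) = zc (snoc' X t i)) :
    (zT (projZ s) - zS (projZ s)) / pdet (snoc' X s) =
      mdet (snoc' (k := d + 1) (snoc' X t) s) / (pdet (snoc' X t) * pdet (snoc' X s)) :=
  stmt2_general hd X s t hT zS zT hzS hzT
end

section
/- Let d ≥ 2, let X be a sequence of d−1 points of ℝ^d, and let s, t ∈ ℝ^d be such that S := X∘s and T := X∘t satisfy ⟦S⟧ ≠ 0 and ⟦T⟧ ≠ 0. Then the creasing is antisymmetric in the two hyperplanes: c(h(S), h(T), X) = −c(h(T), h(S), X), i.e. (z_T(π(s)) − z_S(π(s)))/⟦S⟧ = −(z_S(π(t)) − z_T(π(t)))/⟦T⟧. -/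
/-! The difference `g := z_T - z_S` is an affine function on `ℝ^{d-1}` vanishing on `π(X)`, and so is
`p ↦ [π(X) ∘ p]`, the determinant being linear in the row `(p, 1)`. As `⟦S⟧ ≠ 0`, the lifted
points `(π(x), 1)`, `x ∈ S`, form a basis of `ℝ^d`; the homogenizations of both functions vanish on
all of its vectors but the last, so the two functions are proportional:
`g(π(t)) ⟦S⟧ = g(π(s)) ⟦T⟧`, which is the claim. -/

namespace Matrix

variable {K ι : Type*} [Field K] [Fintype ι] [DecidableEq ι]

def detUpdateRowLinearMap (A : Matrix ι ι K) (i : ι) : (ι → K) →ₗ[K] K where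
  toFun x := (A.updateRow i x).det
  map_add' := det_updateRow_add A i
  map_smul' := det_updateRow_smul A i

theorem apply_mul_det_eq_apply_row_mul_det_updateRow {A : Matrix ι ι K} (hA : A.det ≠ 0) (i : ι)
    (G : (ι → K) →ₗ[K] K) (hG : ∀ j ≠ i, G (A j) = 0) (x : ι → K) :
    G x * A.det = G (A i) * (A.updateRow i x).det := by
  have hrows : Submodule.span K (Set.range A) = ⊤ :=
    (linearIndependent_rows_iff_isUnit.2 ((isUnit_iff_isUnit_det A).2 hA.isUnit)
      ).span_eq_top_of_card_eq_finrank' (by simp)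
  have hext : A.det • G = G (A i) • A.detUpdateRowLinearMap i := by
    refine LinearMap.ext_on_range hrows fun j => ?_
    obtain rfl | hji := eq_or_ne j i
    · simp [detUpdateRowLinearMap, updateRow_eq_self, mul_comm]
    · simp [detUpdateRowLinearMap, hG j hji, det_updateRow_eq_zero hji]
  simpa [detUpdateRowLinearMap, mul_comm] using LinearMap.congr_fun hext x

end Matrix

section Lifting

variable {k : ℕ}

@[simp]
theorem projZ_liftPt (p : Fin (k - 1) → ℝ) (z : ℝ) : projZ (liftPt (d := k) p z) = p := by
  ext i
  simp [projZ, liftPt]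

theorem snoc'_of_lt {α : Type*} (X : Fin (k - 1) → α) (s : α) {i : Fin k} (hi : (i : ℕ) < k - 1) :
    snoc' X s i = X ⟨i, hi⟩ :=
  dif_pos hi

theorem update_snoc'_last {α : Type*} (hk : 0 < k) (X : Fin (k - 1) → α) (s t : α) :
    Function.update (snoc' X s) ⟨k - 1, by omega⟩ t = snoc' X t := by
  ext i
  by_cases hi : (i : ℕ) < k - 1
  · rw [Function.update_of_ne (fun h => by simp [h] at hi), snoc'_of_lt X s hi, snoc'_of_lt X t hi]
  · rw [show i = ⟨k - 1, by omega⟩ by ext; simp; omega]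
    simp [snoc']

theorem pdet_snoc' (X : Fin (k - 1) → Fin k → ℝ) (s : Fin k → ℝ) :
    pdet (snoc' X s) = mdet (snoc' (fun i => projZ (X i)) (projZ s)) := by
  unfold pdet snoc'
  congr 1
  ext i : 1
  split_ifs <;> rfl

theorem mdet_eq_det_liftPt (S : Fin k → Fin (k - 1) → ℝ) :
    mdet S = Matrix.det (Matrix.of fun j => liftPt (S j) 1) := by
  rw [← Matrix.det_transpose]
  rfl

def AffineMap.homogenize (hk : 0 < k) (f : (Fin (k - 1) → ℝ) →ᵃ[ℝ] ℝ) : (Fin k → ℝ) →ₗ[ℝ] ℝ :=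
  f.linear ∘ₗ LinearMap.funLeft ℝ ℝ (Fin.castLE (Nat.sub_le k 1)) +
    f 0 • LinearMap.proj ⟨k - 1, by omega⟩

theorem AffineMap.homogenize_liftPt (hk : 0 < k) (f : (Fin (k - 1) → ℝ) →ᵃ[ℝ] ℝ)
    (p : Fin (k - 1) → ℝ) : f.homogenize hk (liftPt p 1) = f p := by
  have hproj : LinearMap.funLeft ℝ ℝ (Fin.castLE (Nat.sub_le k 1)) (liftPt p 1) = p :=
    projZ_liftPt p 1
  have hlast : liftPt p 1 ⟨k - 1, by omega⟩ = 1 := dif_neg (lt_irrefl _)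
  simp only [AffineMap.homogenize, LinearMap.add_apply, LinearMap.comp_apply, LinearMap.smul_apply,
    LinearMap.proj_apply, hproj, hlast, smul_eq_mul, mul_one]
  exact (congrFun f.decomp p).symm

theorem AffineMap.apply_mul_mdet_snoc' (Y : Fin (k - 1) → Fin (k - 1) → ℝ)
    {p : Fin (k - 1) → ℝ} (hp : mdet (snoc' Y p) ≠ 0) (g : (Fin (k - 1) → ℝ) →ᵃ[ℝ] ℝ)
    (hg : ∀ i, g (Y i) = 0) (q : Fin (k - 1) → ℝ) :
    g q * mdet (snoc' Y p) = g p * mdet (snoc' Y q) := by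
  obtain rfl | hk := Nat.eq_zero_or_pos k
  · rw [Subsingleton.elim (α := Fin 0 → ℝ) q p]
  set last : Fin k := ⟨k - 1, by omega⟩
  set A : Matrix (Fin k) (Fin k) ℝ := Matrix.of fun j => liftPt (snoc' Y p j) 1
  have hAq : A.updateRow last (liftPt q 1) = Matrix.of fun j => liftPt (snoc' Y q j) 1 := by
    rw [Matrix.updateRow, ← update_snoc'_last hk Y p q]
    exact congrArg Matrix.of (Function.comp_update (fun x => liftPt x 1) (snoc' Y p) last q).symm
  have hA : A.det ≠ 0 := by rwa [← mdet_eq_det_liftPt]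
  have hgA : ∀ j ≠ last, g.homogenize hk (A j) = 0 := by
    intro j hj
    have hjk : (j : ℕ) < k - 1 := (Nat.le_sub_one_of_lt j.isLt).lt_of_ne fun h => hj (Fin.ext h)
    change g.homogenize hk (liftPt (snoc' Y p j) 1) = 0
    rw [AffineMap.homogenize_liftPt, snoc'_of_lt Y p hjk, hg]
  have key := Matrix.apply_mul_det_eq_apply_row_mul_det_updateRow hA last _ hgA (liftPt q 1)
  rwa [hAq, ← mdet_eq_det_liftPt, ← mdet_eq_det_liftPt, AffineMap.homogenize_liftPt,
    show A last = liftPt p 1 from congrArg (liftPt · 1) (dif_neg (lt_irrefl _)),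
    AffineMap.homogenize_liftPt] at key

end Lifting

theorem stmt3_general {d : ℕ} (X : Fin (d - 1) → (Fin d → ℝ)) (s t : Fin d → ℝ)
    (hS : pdet (snoc' X s) ≠ 0) (hT : pdet (snoc' X t) ≠ 0)
    (zS zT : (Fin (d - 1) → ℝ) →ᵃ[ℝ] ℝ)
    (hzS : ∀ i, zS (projZ (snoc' X s i)) = zc (snoc' X s i))
    (hzT : ∀ i, zT (projZ (snoc' X t i)) = zc (snoc' X t i)) :
    (zT (projZ s) - zS (projZ s)) / pdet (snoc' X s) =
      -((zS (projZ t) - zT (projZ t)) / pdet (snoc' X t)) := by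
  have hgX : ∀ i, (zT - zS) (projZ (X i)) = 0 := by
    intro i
    have hi : ((⟨i, by omega⟩ : Fin d) : ℕ) < d - 1 := i.isLt
    have hs := hzS ⟨i, by omega⟩
    have ht := hzT ⟨i, by omega⟩
    rw [snoc'_of_lt X s hi] at hs
    rw [snoc'_of_lt X t hi] at ht
    simp [hs, ht]
  have key := (zT - zS).apply_mul_mdet_snoc' _ (p := projZ s) (by rwa [← pdet_snoc']) hgX
    (projZ t)
  rw [← pdet_snoc', ← pdet_snoc'] at key
  simp only [AffineMap.coe_sub, Pi.sub_apply] at key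
  rw [← neg_div, neg_sub, div_eq_div_iff hS hT, ← key]

/-- Lemma 2(a): the creasing is antisymmetric in the two hyperplanes:
`c(h(S), h(T), X) = −c(h(T), h(S), X)`. -/
theorem stmt3 {d : ℕ} (hd : 2 ≤ d) (X : Fin (d - 1) → (Fin d → ℝ)) (s t : Fin d → ℝ)
    (hS : pdet (snoc' X s) ≠ 0) (hT : pdet (snoc' X t) ≠ 0)
    (zS zT : (Fin (d - 1) → ℝ) →ᵃ[ℝ] ℝ)
    (hzS : ∀ i, zS (projZ (snoc' X s i)) = zc (snoc' X s i))
    (hzT : ∀ i, zT (projZ (snoc' X t i)) = zc (snoc' X t i)) :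
    (zT (projZ s) - zS (projZ s)) / pdet (snoc' X s) =
      -((zS (projZ t) - zT (projZ t)) / pdet (snoc' X t)) :=
  stmt3_general X s t hS hT zS zT hzS hzT
end

section
/- Let d ≥ 2, L > 0 and α > 0. Let X = (x_1, …, x_d) be a sequence of points of ℝ^{d−1}, each lying in the simplex Δ := {y ∈ ℝ^{d−1} : y_i ≥ 0 for all i and y_1 + ⋯ + y_{d−1} ≤ L}, and let X' = (x'_1, …, x'_d) be points of ℝ^{d−1} obtained by rounding each coordinate down by at most α while staying nonnegative, i.e. 0 ≤ (x'_j)_i ≤ (x_j)_i and (x_j)_i − (x'_j)_i ≤ α for all i and j. Then |[X] − [X']| ≤ α·d²·L^{d−2}. -/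
open Finset

namespace Matrix

theorem abs_det_le_prod_sum_of_nonneg {ι : Type*} [Fintype ι] [DecidableEq ι]
    {A : Matrix ι ι ℝ} (hA : ∀ i j, 0 ≤ A i j) : |A.det| ≤ ∏ j, ∑ i, A i j := by
  calc |A.det| ≤ ∑ σ : Equiv.Perm ι, ∏ j, A (σ j) j := by
        rw [det_apply']
        refine (abs_sum_le_sum_abs _ _).trans_eq (sum_congr rfl fun σ _ => ?_)
        rw [abs_mul, abs_of_nonneg (prod_nonneg fun j _ => hA _ _)]
        rcases Int.units_eq_one_or (Equiv.Perm.sign σ) with hσ | hσ <;> simp [hσ]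
    _ = ∑ f ∈ univ.image fun σ : Equiv.Perm ι => ⇑σ, ∏ j, A (f j) j :=
        by rw [sum_image fun _ _ _ _ h => Equiv.coe_fn_injective h]
    _ ≤ ∑ f : ι → ι, ∏ j, A (f j) j :=
        sum_le_sum_of_subset_of_nonneg (subset_univ _) fun f _ _ => prod_nonneg fun j _ => hA _ _
    _ = ∏ j, ∑ i, A i j := (Fintype.prod_sum fun j i => A i j).symm

theorem det_sub_det_eq_sum_det_updateCol {R : Type*} [CommRing R] {k : ℕ}
    (A B : Matrix (Fin k) (Fin k) R) :
    A.det - B.det = ∑ m : Fin k,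
      ((of fun i j => if m < j then A i j else B i j).updateCol m (Aᵀ m - Bᵀ m)).det := by
  set H : ℕ → Matrix (Fin k) (Fin k) R :=
    fun m => of fun i j => if m ≤ (j : ℕ) then A i j else B i j
  have hstep : ∀ m : Fin k,
      (H m).det - (H (m + 1)).det = ((H (m + 1)).updateCol m (Aᵀ m - Bᵀ m)).det := by
    intro m
    have hA : H m = (H (m + 1)).updateCol m (Aᵀ m) := by
      ext i j
      rcases eq_or_ne j m with rfl | hj
      · simp [H]
      · have : (m : ℕ) ≤ j ↔ (m : ℕ) + 1 ≤ j := by have := Fin.val_ne_of_ne hj; omega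
        simp [H, updateCol_ne hj, this]
    have hB : (H (m + 1)).updateCol m (Bᵀ m) = H (m + 1) := by
      convert updateCol_eq_self (H (m + 1)) m using 2
      ext i
      simp [H]
    have hsplit := det_updateCol_add (H (m + 1)) m (Aᵀ m - Bᵀ m) (Bᵀ m)
    rw [sub_add_cancel] at hsplit
    rw [hA, hsplit, hB, add_sub_cancel_right]
  have hH : ∀ m : Fin k, (of fun i j => if m < j then A i j else B i j) = H (m + 1) :=
    fun _ => rfl
  simp_rw [hH, ← hstep]
  rw [Fin.sum_univ_eq_sum_range (fun m => (H m).det - (H (m + 1)).det), sum_range_sub']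
  congr 2
  ext i j
  simp [H]

/-- The columns of `A` are points of the simplex `{x ≥ 0, ∑ xᵢ ≤ L}` in homogeneous
coordinates `(x, 1)`. -/
structure IsLiftedSimplex {n : ℕ} {m : Type*} (L : ℝ) (A : Matrix (Fin (n + 1)) m ℝ) : Prop where
  last_row : ∀ j, A (Fin.last n) j = 1
  nonneg : ∀ i j, 0 ≤ A i j
  sum_le : ∀ j, ∑ i : Fin n, A i.castSucc j ≤ L

namespace IsLiftedSimplex

variable {n : ℕ} {m m' : Type*} {L α : ℝ}

theorem submatrix {A : Matrix (Fin (n + 2)) m ℝ} (hA : A.IsLiftedSimplex L) (i : Fin (n + 1))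
    (f : m' → m) : (A.submatrix i.castSucc.succAbove f).IsLiftedSimplex L where
  last_row j := by simpa [Fin.castSucc_ne_last] using hA.last_row (f j)
  nonneg _ _ := hA.nonneg _ _
  sum_le j := calc
    ∑ p : Fin n, A (i.castSucc.succAbove p.castSucc) (f j)
        ≤ A i.castSucc (f j) + ∑ p : Fin n, A (i.succAbove p).castSucc (f j) := by
          simpa using hA.nonneg _ _
    _ = ∑ r : Fin (n + 1), A r.castSucc (f j) :=
          (Fin.sum_univ_succAbove (fun r => A r.castSucc (f j)) i).symm
    _ ≤ L := hA.sum_le (f j)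

theorem abs_det_le {A : Matrix (Fin (n + 1)) (Fin (n + 1)) ℝ} (hA : A.IsLiftedSimplex L)
    (hL : 0 < L) : |A.det| ≤ L ^ n := by
  set c : Fin (n + 1) → ℝ := Fin.snoc (fun _ => -1) L
  set B := A.updateRow (Fin.last n) (∑ k, c k • A k)
  have hB_last : ∀ j, B (Fin.last n) j = L - ∑ i : Fin n, A i.castSucc j := by
    intro j
    simp [B, c, Fin.sum_univ_castSucc, hA.last_row, sub_eq_neg_add]
  have hB_ne_last : ∀ (i : Fin n) j, B i.castSucc j = A i.castSucc j := fun i j =>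
    congrFun (updateRow_ne (Fin.castSucc_ne_last i)) j
  have hB_nonneg : ∀ i j, 0 ≤ B i j := by
    refine Fin.lastCases (fun j => ?_) (fun i j => ?_)
    · rw [hB_last]; linarith [hA.sum_le j]
    · rw [hB_ne_last]; exact hA.nonneg _ _
  have hB_sum : ∀ j, ∑ i, B i j = L := by
    intro j
    simp only [Fin.sum_univ_castSucc, hB_last, hB_ne_last]
    ring
  have hB_det : B.det = L * A.det := by
    simpa [c] using det_updateRow_sum A (Fin.last n) c
  have : L * |A.det| ≤ L * L ^ n := by
    calc L * |A.det| = |B.det| := by rw [hB_det, abs_mul, abs_of_pos hL]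
      _ ≤ ∏ j, ∑ i, B i j := abs_det_le_prod_sum_of_nonneg hB_nonneg
      _ = L * L ^ n := by simp [hB_sum, pow_succ']
  exact le_of_mul_le_mul_left this hL

theorem ite {A B : Matrix (Fin (n + 1)) m ℝ} (hA : A.IsLiftedSimplex L)
    (hB : B.IsLiftedSimplex L) (p : m → Prop) [DecidablePred p] :
    (of fun i j => if p j then A i j else B i j).IsLiftedSimplex L where
  last_row j := by by_cases h : p j <;> simp [h, hA.last_row, hB.last_row]
  nonneg i j := by by_cases h : p j <;> simp [h, hA.nonneg, hB.nonneg]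
  sum_le j := by by_cases h : p j <;> simp [h, hA.sum_le, hB.sum_le]

theorem abs_det_updateCol_le {A : Matrix (Fin (n + 2)) (Fin (n + 2)) ℝ}
    (hA : A.IsLiftedSimplex L) (hL : 0 < L) (j : Fin (n + 2)) {v : Fin (n + 2) → ℝ}
    (hv : ∀ i, |v i| ≤ α) (hv_last : v (Fin.last (n + 1)) = 0) :
    |(A.updateCol j v).det| ≤ (n + 1) * α * L ^ n := by
  have hα : 0 ≤ α := (abs_nonneg _).trans (hv 0)
  have hminor : ∀ i : Fin (n + 2), (A.updateCol j v).submatrix i.succAbove j.succAbove =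
      A.submatrix i.succAbove j.succAbove := fun i => by
    ext p q
    exact updateCol_ne (Fin.succAbove_ne j q)
  rw [det_succ_column _ j, Fin.sum_univ_castSucc]
  simp only [updateCol_self, hv_last, hminor, mul_zero, zero_mul, add_zero]
  calc _ ≤ ∑ _i : Fin (n + 1), α * L ^ n := by
        refine (abs_sum_le_sum_abs _ _).trans (sum_le_sum fun i _ => ?_)
        rw [abs_mul, abs_mul, abs_neg_one_pow, one_mul]
        exact mul_le_mul (hv _) ((hA.submatrix i _).abs_det_le hL) (abs_nonneg _) hα
    _ = (n + 1) * α * L ^ n := by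
      simp only [sum_const, card_univ, Fintype.card_fin, nsmul_eq_mul, Nat.cast_add, Nat.cast_one]
      ring

theorem abs_det_sub_det_le {A B : Matrix (Fin (n + 2)) (Fin (n + 2)) ℝ}
    (hA : A.IsLiftedSimplex L) (hB : B.IsLiftedSimplex L) (hL : 0 < L)
    (hAB : ∀ i j, |A i j - B i j| ≤ α) :
    |A.det - B.det| ≤ (n + 2) * ((n + 1) * α * L ^ n) := by
  rw [det_sub_det_eq_sum_det_updateCol]
  calc _ ≤ ∑ _m : Fin (n + 2), (n + 1) * α * L ^ n := by
        refine (abs_sum_le_sum_abs _ _).trans (sum_le_sum fun m _ => ?_)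
        refine (hA.ite hB _).abs_det_updateCol_le hL m (fun i => hAB i m) ?_
        simp [hA.last_row, hB.last_row]
    _ = (n + 2) * ((n + 1) * α * L ^ n) := by simp

end IsLiftedSimplex

end Matrix

def liftMatrix {n : ℕ} {m : Type*} (S : m → Fin n → ℝ) : Matrix (Fin (n + 1)) m ℝ :=
  Matrix.of fun i j => if h : (i : ℕ) < n then S j ⟨i, h⟩ else 1

theorem mdet_eq_det_liftMatrix {n : ℕ} (S : Fin (n + 2) → Fin (n + 1) → ℝ) :
    mdet S = (liftMatrix S).det :=
  rfl

theorem isLiftedSimplex_liftMatrix {n : ℕ} {m : Type*} {L : ℝ} {S : m → Fin n → ℝ}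
    (hnn : ∀ j i, 0 ≤ S j i) (hsum : ∀ j, ∑ i, S j i ≤ L) :
    (liftMatrix S).IsLiftedSimplex L where
  last_row j := by simp [liftMatrix]
  nonneg i j := by
    by_cases h : (i : ℕ) < n
    · simpa [liftMatrix, h] using hnn j _
    · simp [liftMatrix, h]
  sum_le j := by simpa [liftMatrix] using hsum j

theorem stmt8_general (d : ℕ) (hd : 2 ≤ d) (L α : ℝ) (hL : 0 < L)
    (X X' : Fin d → (Fin (d - 1) → ℝ))
    (hXnn : ∀ j i, 0 ≤ X j i) (hXsum : ∀ j, ∑ i, X j i ≤ L)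
    (hnn : ∀ j i, 0 ≤ X' j i) (hle : ∀ j i, X' j i ≤ X j i)
    (hα' : ∀ j i, X j i - X' j i ≤ α) :
    |mdet X - mdet X'| ≤ α * d ^ 2 * L ^ (d - 2) := by
  obtain ⟨n, rfl⟩ : ∃ n, d = n + 2 := ⟨d - 2, by omega⟩
  have hα : 0 ≤ α := (sub_nonneg.2 (hle 0 (0 : Fin (n + 1)))).trans (hα' 0 _)
  have hX'sum : ∀ j, ∑ i, X' j i ≤ L := fun j => (sum_le_sum fun i _ => hle j i).trans (hXsum j)
  have hdiff : ∀ i j, |liftMatrix (n := n + 1) X i j - liftMatrix (n := n + 1) X' i j| ≤ α := by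
    intro i j
    by_cases h : (i : ℕ) < n + 1
    · simp only [liftMatrix, Matrix.of_apply, dif_pos h]
      rw [abs_of_nonneg (sub_nonneg.2 (hle _ _))]
      exact hα' j _
    · simpa only [liftMatrix, Matrix.of_apply, dif_neg h, sub_self, abs_zero] using hα
  rw [mdet_eq_det_liftMatrix, mdet_eq_det_liftMatrix]
  refine ((isLiftedSimplex_liftMatrix hXnn hXsum).abs_det_sub_det_le
    (isLiftedSimplex_liftMatrix hnn hX'sum) hL hdiff).trans ?_
  have hslack : 0 ≤ α * L ^ n * (n + 2) := by positivity
  rw [Nat.add_sub_cancel]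
  push_cast
  linarith

/-- Lemma 8: rounding each coordinate of the `d` points of `X ⊆ Δ` down
by at most `α` (staying nonnegative) changes `[X]` by at most `α·d²·L^{d-2}`. -/
theorem stmt8 (d : ℕ) (hd : 2 ≤ d) (L α : ℝ) (hL : 0 < L) (hα : 0 < α)
    (X X' : Fin d → (Fin (d - 1) → ℝ))
    (hXnn : ∀ j i, 0 ≤ X j i) (hXsum : ∀ j, ∑ i, X j i ≤ L)
    (hnn : ∀ j i, 0 ≤ X' j i) (hle : ∀ j i, X' j i ≤ X j i)
    (hα' : ∀ j i, X j i - X' j i ≤ α) :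
    |mdet X - mdet X'| ≤ α * d ^ 2 * L ^ (d - 2) :=
  stmt8_general d hd L α hL X X' hXnn hXsum hnn hle hα'
end

section
/- Let d ≥ 2, let B = (b_1, …, b_d) be a sequence of d points of ℝ^{d−1}, and let q_0, q_1, …, q_d be d+1 points of ℝ^{d−1}, each contained in the convex hull of {b_1, …, b_d}. Then the sum over i = 0, …, d of |[Q_{−i}]| is at most 2·|[B]|, where Q_{−i} denotes the sequence (q_0, …, q_d) with q_i omitted. (The simplices spanned by the d-element subsets of d+1 points cover the convex hull of the points at most twice.) -/
/-!
Write each `q k` as a convex combination `∑ m, Λ k m • B m`; the stochastic `(d+1) × d` matrix `Λ`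
gives `[Q₋ᵢ] = [B] · det Λ₋ᵢ`, where `Λ₋ᵢ` drops row `i`. Bounding `|det Λ₋ᵢ|` by the permanent and
multiplying by the row sum `∑ₘ Λ i m = 1`, the sum `∑ᵢ |det Λ₋ᵢ|` is at most a sum of products
`∏ₖ Λ k (F k)` over maps `F : Fin (d+1) → Fin d`, each counted once for every `i` such that `F`
is injective off `i`. Such an `i` lies on every collision of `F`, so there are at most two of them,
and `∑_F ∏ₖ Λ k (F k) = ∏ₖ ∑ₘ Λ k m = 1`.
-/

open Finset Function

lemma exists_weights_of_mem_convexHull_range {ι E : Type*} [Fintype ι] [AddCommGroup E]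
    [Module ℝ E] {v : ι → E} {x : E} (hx : x ∈ convexHull ℝ (Set.range v)) :
    ∃ w : ι → ℝ, (∀ i, 0 ≤ w i) ∧ ∑ i, w i = 1 ∧ ∑ i, w i • v i = x := by
  classical
  obtain ⟨s, w, hw₀, hw₁, rfl⟩ := (convexHull_range_eq_exists_affineCombination v).le hx
  refine ⟨fun i => if i ∈ s then w i else 0, fun i => ?_, ?_, ?_⟩
  · by_cases hi : i ∈ s <;> simp [hi, hw₀]
  · rw [sum_ite_mem, univ_inter, hw₁]
  · simp only [s.affineCombination_eq_linear_combination v w hw₁, ite_smul, zero_smul,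
      sum_ite_mem, univ_inter]

lemma Matrix.abs_det_le_permanent {n : Type*} [Fintype n] [DecidableEq n]
    {M : Matrix n n ℝ} (hM : ∀ i j, 0 ≤ M i j) : |M.det| ≤ M.permanent := by
  rw [Matrix.det_apply, Matrix.permanent]
  refine (abs_sum_le_sum_abs _ _).trans (sum_le_sum fun σ _ => ?_)
  rcases Int.units_eq_one_or (Equiv.Perm.sign σ) with h | h <;>
    simp [h, abs_of_nonneg (prod_nonneg fun i _ => hM (σ i) i)]

lemma Fin.card_filter_injective_comp_succAbove_le_two {n : ℕ} {α : Type*} [DecidableEq α]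
    {F : Fin (n + 1) → α} (hF : ¬ Injective F) :
    #{i : Fin (n + 1) | Injective (F ∘ i.succAbove)} ≤ 2 := by
  obtain ⟨a, b, hFab, hab⟩ : ∃ a b, F a = F b ∧ a ≠ b := by
    simpa [Injective] using hF
  calc #{i : Fin (n + 1) | Injective (F ∘ i.succAbove)} ≤ #{a, b} := by
        refine card_le_card fun i hi => ?_
        by_contra hiab
        simp only [mem_insert, mem_singleton, not_or] at hiab
        obtain ⟨ja, rfl⟩ := Fin.exists_succAbove_eq (Ne.symm hiab.1)
        obtain ⟨jb, rfl⟩ := Fin.exists_succAbove_eq (Ne.symm hiab.2)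
        exact hab (congrArg i.succAbove ((mem_filter.1 hi).2 hFab))
    _ ≤ 2 := card_le_two

lemma Fin.card_filter_insertNth_eq_le_two {n : ℕ} (F : Fin (n + 1) → Fin n) :
    #{t : Fin (n + 1) × Equiv.Perm (Fin n) × Fin n | t.1.insertNth t.2.2 t.2.1 = F} ≤ 2 := by
  have hF : ¬ Injective F := fun h => by simpa using Fintype.card_le_of_injective F h
  refine le_trans (card_le_card_of_injOn Prod.fst ?_ ?_)
    (Fin.card_filter_injective_comp_succAbove_le_two hF)
  · rintro ⟨i, σ, m⟩ h
    simp only [coe_filter, mem_univ, true_and, Set.mem_ofPred] at h ⊢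
    subst h
    simpa [comp_def] using σ.injective
  · rintro ⟨i, σ, m⟩ h ⟨i', σ', m'⟩ h' (rfl : i = i')
    simp only [coe_filter, mem_univ, true_and, Set.mem_ofPred] at h h'
    rw [← h'] at h
    have hσ : σ = σ' := Equiv.ext fun j => by simpa using congrFun h (i.succAbove j)
    have hm : m = m' := by simpa using congrFun h i
    rw [hσ, hm]

lemma sum_comp_le_mul_sum_of_card_fiber_le {ι κ : Type*} [Fintype ι] [Fintype κ]
    [DecidableEq κ] (G : ι → κ) {w : κ → ℝ} (hw : ∀ y, 0 ≤ w y) {k : ℕ}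
    (hG : ∀ y, #{x | G x = y} ≤ k) : ∑ x, w (G x) ≤ k * ∑ y, w y := by
  rw [← sum_fiberwise univ G, mul_sum]
  refine sum_le_sum fun y _ => ?_
  rw [sum_congr rfl fun x hx => congrArg w (mem_filter.1 hx).2, sum_const, nsmul_eq_mul]
  exact mul_le_mul_of_nonneg_right (by exact_mod_cast hG y) (hw y)

lemma sum_permanent_submatrix_succAbove_le_two {n : ℕ}
    {L : Matrix (Fin (n + 1)) (Fin n) ℝ} (hL₀ : ∀ k m, 0 ≤ L k m) (hL₁ : ∀ k, ∑ m, L k m = 1) :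
    ∑ i : Fin (n + 1), (L.submatrix i.succAbove id).permanent ≤ 2 := by
  let w : (Fin (n + 1) → Fin n) → ℝ := fun F => ∏ k, L k (F k)
  have hw : ∑ F, w F = 1 := by
    have := Fintype.prod_sum (fun k m => L k m)
    simp only [hL₁, prod_const_one] at this
    exact this.symm
  have hw_insertNth (i : Fin (n + 1)) (σ : Equiv.Perm (Fin n)) (m : Fin n) :
      L i m * ∏ j, L (i.succAbove j) (σ j) = w (i.insertNth m σ) := by
    simp [w, Fin.prod_univ_succAbove _ i]
  calc ∑ i : Fin (n + 1), (L.submatrix i.succAbove id).permanent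
      = ∑ i : Fin (n + 1), ∑ σ : Equiv.Perm (Fin n),
          (∑ m, L i m) * ∏ j, L (i.succAbove j) (σ j) := by
        simp only [hL₁, one_mul, ← Matrix.permanent_transpose (L.submatrix _ id)]
        rfl
    _ = ∑ t : Fin (n + 1) × Equiv.Perm (Fin n) × Fin n, w (t.1.insertNth t.2.2 t.2.1) := by
        simp only [Fintype.sum_prod_type, sum_mul, hw_insertNth]
    _ ≤ 2 * ∑ F, w F :=
        sum_comp_le_mul_sum_of_card_fiber_le _ (fun F => prod_nonneg fun k _ => hL₀ k (F k))
          Fin.card_filter_insertNth_eq_le_two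
    _ = 2 := by rw [hw, mul_one]

lemma sum_abs_det_submatrix_succAbove_le_two {n : ℕ}
    {L : Matrix (Fin (n + 1)) (Fin n) ℝ} (hL₀ : ∀ k m, 0 ≤ L k m) (hL₁ : ∀ k, ∑ m, L k m = 1) :
    ∑ i : Fin (n + 1), |(L.submatrix i.succAbove id).det| ≤ 2 :=
  (sum_le_sum fun _ _ => Matrix.abs_det_le_permanent fun _ _ => hL₀ _ _).trans
    (sum_permanent_submatrix_succAbove_le_two hL₀ hL₁)

lemma mdet_sum_smul {k : ℕ} (B : Fin k → Fin (k - 1) → ℝ) (L : Matrix (Fin k) (Fin k) ℝ)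
    (hL : ∀ j, ∑ m, L j m = 1) : mdet (fun j => ∑ m, L j m • B m) = mdet B * L.det := by
  rw [mdet, mdet, ← Matrix.det_transpose L, ← Matrix.det_mul]
  congr 1
  ext r j
  simp only [Matrix.of_apply, Matrix.mul_apply, Matrix.transpose_apply]
  split_ifs
  · simp [Finset.sum_apply, mul_comm]
  · simp [hL j]

theorem stmt11_general (d : ℕ)
    (B : Fin d → (Fin (d - 1) → ℝ)) (q : Fin (d + 1) → (Fin (d - 1) → ℝ))
    (hq : ∀ i, q i ∈ convexHull ℝ (Set.range B)) :
    ∑ i : Fin (d + 1), |mdet (fun j : Fin d => q (i.succAbove j))| ≤ 2 * |mdet B| := by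
  choose L hL₀ hL₁ hLq using fun k => exists_weights_of_mem_convexHull_range (hq k)
  have hfactor (i : Fin (d + 1)) : mdet (fun j => q (i.succAbove j))
      = mdet B * (Matrix.of L |>.submatrix i.succAbove id).det := by
    simp_rw [← hLq]
    exact mdet_sum_smul B _ fun _ => hL₁ _
  calc ∑ i : Fin (d + 1), |mdet (fun j => q (i.succAbove j))|
      = |mdet B| * ∑ i : Fin (d + 1), |(Matrix.of L |>.submatrix i.succAbove id).det| := by
        simp only [hfactor, abs_mul, mul_sum]
    _ ≤ |mdet B| * 2 :=
        mul_le_mul_of_nonneg_left (sum_abs_det_submatrix_succAbove_le_two hL₀ hL₁) (abs_nonneg _)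
    _ = 2 * |mdet B| := mul_comm _ _

/-- for `d+1` points `q_0, …, q_d` of ℝ^{d-1} contained in the convex hull
of `d` points `B`, the sum of the absolute determinants of the `d`-element subsequences of
`(q_0, …, q_d)` is at most `2·|[B]|`. -/
theorem stmt11 (d : ℕ) (hd : 2 ≤ d)
    (B : Fin d → (Fin (d - 1) → ℝ)) (q : Fin (d + 1) → (Fin (d - 1) → ℝ))
    (hq : ∀ i, q i ∈ convexHull ℝ (Set.range B)) :
    ∑ i : Fin (d + 1), |mdet (fun j : Fin d => q (i.succAbove j))| ≤ 2 * |mdet B| :=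
  stmt11_general d B q hq
end
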